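/- For every real b with |b| ≤ 1/2, the binary entropy of a Bernoulli random variable with bias b satisfies 1 − 4b² ≤ H₂(1/2 + b) ≤ (1 − 4b²)^{1/ln 4}. -/

import Mathlib

/-- Binary entropy `H₂(q)` (in bits), with the convention `0·log 0 = 0`
(which holds automatically since `Real.logb 2 0 = 0`). -/
noncomputable def binEnt (q : ℝ) : ℝ :=
  -(q * Real.logb 2 q) - (1 - q) * Real.logb 2 (1 - q)

open Real Set

noncomputable def st17f (x : ℝ) : ℝ := (1+x) * Real.log (1+x) + (1-x) * Real.log (1-x)
noncomputable def st17A (x : ℝ) : ℝ := (Real.log (1+x) - Real.log (1-x)) / 2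

lemma st17f_cont : Continuous st17f := by
  have h := Real.continuous_mul_log
  exact (h.comp (continuous_const.add continuous_id)).add
    (h.comp (continuous_const.sub continuous_id))

lemma st17_hd_log1p {x : ℝ} (h : 0 < 1 + x) :
    HasDerivAt (fun y : ℝ => Real.log (1+y)) (1/(1+x)) x := by
  have := (Real.hasDerivAt_log h.ne').comp x ((hasDerivAt_id x).const_add 1)
  simpa [one_div, Function.comp_def] using this

lemma st17_hd_log1m {x : ℝ} (h : 0 < 1 - x) :
    HasDerivAt (fun y : ℝ => Real.log (1-y)) (-(1/(1-x))) x := by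
  have := (Real.hasDerivAt_log h.ne').comp x ((hasDerivAt_id x).const_sub 1)
  simpa [one_div, Function.comp_def] using this

lemma st17_hd_A {x : ℝ} (h1 : 0 < 1 + x) (h2 : 0 < 1 - x) :
    HasDerivAt st17A (1/(1-x^2)) x := by
  have := ((st17_hd_log1p h1).sub (st17_hd_log1m h2)).div_const 2
  refine HasDerivAt.congr_deriv this ?_
  have e1 : (1:ℝ) + x ≠ 0 := h1.ne'
  have e2 : (1:ℝ) - x ≠ 0 := h2.ne'
  have e3 : (1:ℝ) - x^2 ≠ 0 := by nlinarith
  field_simp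
  ring

lemma st17_hd_f {x : ℝ} (h1 : 0 < 1 + x) (h2 : 0 < 1 - x) :
    HasDerivAt st17f (2 * st17A x) x := by
  have hp : HasDerivAt (fun y : ℝ => (1+y) * Real.log (1+y))
      (1 * Real.log (1+x) + (1+x) * (1/(1+x))) x :=
    (((hasDerivAt_id x).const_add 1)).mul (st17_hd_log1p h1)
  have hm : HasDerivAt (fun y : ℝ => (1-y) * Real.log (1-y))
      ((-1) * Real.log (1-x) + (1-x) * (-(1/(1-x)))) x := by
    have := (((hasDerivAt_id x).const_sub 1)).mul (st17_hd_log1m h2)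
    simpa [Pi.mul_def] using this
  have := hp.add hm
  refine HasDerivAt.congr_deriv this ?_
  have e1 : (1:ℝ) + x ≠ 0 := h1.ne'
  have e2 : (1:ℝ) - x ≠ 0 := h2.ne'
  unfold st17A
  field_simp
  ring

lemma st17_A_ge {x : ℝ} (h0 : 0 ≤ x) (h1 : x < 1) : x ≤ st17A x := by
  have key : MonotoneOn (fun y => st17A y - y) (Ico (0:ℝ) 1) := by
    apply monotoneOn_of_deriv_nonneg (convex_Ico 0 1)
    · intro y hy
      have hy1 : 0 < 1 + y := by cases hy with | intro a b => linarith
      have hy2 : 0 < 1 - y := by cases hy with | intro a b => linarith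
      exact (((st17_hd_A hy1 hy2).sub (hasDerivAt_id' (𝕜 := ℝ) (x := y))).continuousAt).continuousWithinAt
    · intro y hy
      rw [interior_Ico] at hy
      have hy1 : 0 < 1 + y := by cases hy with | intro a b => linarith
      have hy2 : 0 < 1 - y := by cases hy with | intro a b => linarith
      exact (((st17_hd_A hy1 hy2).sub (hasDerivAt_id' (𝕜 := ℝ) (x := y)))).differentiableAt.differentiableWithinAt
    · intro y hy
      rw [interior_Ico] at hy
      obtain ⟨hy0, hy1⟩ := hy
      have hy1' : 0 < 1 + y := by linarith
      have hy2 : 0 < 1 - y := by linarith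
      rw [show deriv (fun y => st17A y - y) y = _ from ((st17_hd_A hy1' hy2).sub (hasDerivAt_id' (𝕜 := ℝ) (x := y))).deriv]
      have : 0 < 1 - y^2 := by nlinarith
      have h4 : 1 ≤ 1/(1-y^2) := by
        rw [le_div_iff₀ this]; nlinarith
      linarith
  have h00 : (0:ℝ) ∈ Ico (0:ℝ) 1 := by constructor <;> norm_num
  have hx : x ∈ Ico (0:ℝ) 1 := ⟨h0, h1⟩
  have := key h00 hx h0
  have hA0 : st17A 0 = 0 := by simp [st17A]
  simp only [hA0] at this
  linarith [this]

lemma st17_mono_Ico {F F' : ℝ → ℝ} (hF : ∀ x ∈ Ico (0:ℝ) 1, HasDerivAt F (F' x) x)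
    (hF' : ∀ x ∈ Ioo (0:ℝ) 1, 0 ≤ F' x) {x : ℝ} (h0 : 0 ≤ x) (h1 : x < 1) : F 0 ≤ F x := by
  have key : MonotoneOn F (Ico (0:ℝ) 1) := by
    apply monotoneOn_of_deriv_nonneg (convex_Ico 0 1)
    · exact fun y hy => (hF y hy).continuousAt.continuousWithinAt
    · intro y hy; rw [interior_Ico] at hy
      exact (hF y (Ioo_subset_Ico_self hy)).differentiableAt.differentiableWithinAt
    · intro y hy; rw [interior_Ico] at hy
      rw [(hF y (Ioo_subset_Ico_self hy)).deriv]; exact hF' y hy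
  exact key ⟨le_refl 0, by norm_num⟩ ⟨h0, h1⟩ h0

lemma st17_hd_sq {x : ℝ} : HasDerivAt (fun y : ℝ => 1 - y^2) (-(2*x)) x := by
  have := (hasDerivAt_pow 2 x).const_sub 1
  simpa using this

lemma st17_k_nonneg {x : ℝ} (h0 : 0 ≤ x) (h1 : x < 1) : 2 * st17A x ≤ 2*x/(1-x^2) := by
  have key : ∀ y ∈ Ico (0:ℝ) 1,
      HasDerivAt (fun z => 2*z/(1-z^2) - 2*st17A z)
        ((2*1*(1-y^2) - 2*y*(-(2*y)))/(1-y^2)^2 - 2*(1/(1-y^2))) y := by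
    intro y hy
    obtain ⟨hy0, hy1⟩ := hy
    have hy1' : 0 < 1 + y := by linarith
    have hy2 : 0 < 1 - y := by linarith
    have hden : (1:ℝ) - y^2 ≠ 0 := by nlinarith
    exact ((hasDerivAt_id' (𝕜 := ℝ) (x := y)).const_mul 2).div st17_hd_sq hden
      |>.sub ((st17_hd_A hy1' hy2).const_mul 2)
  have hchain := st17_mono_Ico key ?_ h0 h1
  · simp only [st17A] at hchain ⊢
    norm_num at hchain
    linarith [hchain]
  · intro y hy
    obtain ⟨hy0, hy1⟩ := hy
    have hden : (0:ℝ) < 1 - y^2 := by nlinarith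
    have e : (2*1*(1-y^2) - 2*y*(-(2*y)))/(1-y^2)^2 - 2*(1/(1-y^2)) = 4*y^2/(1-y^2)^2 := by
      field_simp; ring
    rw [e]
    positivity

lemma st17_h_nonneg {x : ℝ} (h0 : 0 ≤ x) (h1 : x < 1) : 0 ≤ 2*x*st17A x - 2*st17f x := by
  have key : ∀ y ∈ Ico (0:ℝ) 1,
      HasDerivAt (fun z => 2*z*st17A z - 2*st17f z)
        ((2*st17A y + 2*y*(1/(1-y^2))) - 2*(2*st17A y)) y := by
    intro y hy
    obtain ⟨hy0, hy1⟩ := hy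
    have hy1' : 0 < 1 + y := by linarith
    have hy2 : 0 < 1 - y := by linarith
    have hmul : HasDerivAt (fun z : ℝ => 2*z*st17A z) (2*st17A y + 2*y*(1/(1-y^2))) y := by
      have := ((hasDerivAt_id' (𝕜 := ℝ) (x := y)).const_mul 2).mul (st17_hd_A hy1' hy2)
      refine HasDerivAt.congr_deriv this ?_
      ring
    exact hmul.sub ((st17_hd_f hy1' hy2).const_mul 2)
  have hchain := st17_mono_Ico key ?_ h0 h1
  · simp only [st17A, st17f] at hchain ⊢
    norm_num at hchain
    linarith [hchain]
  · intro y hy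
    obtain ⟨hy0, hy1⟩ := hy
    have := st17_k_nonneg (le_of_lt hy0) hy1
    have e : (2*st17A y + 2*y*(1/(1-y^2))) - 2*(2*st17A y) = 2*y/(1-y^2) - 2*st17A y := by
      field_simp
      ring
    rw [e]
    linarith

lemma st17_f_le {x : ℝ} (h0 : 0 ≤ x) (h1 : x ≤ 1) : st17f x ≤ 2 * Real.log 2 * x^2 := by
  rcases eq_or_lt_of_le h0 with h | hx0
  · simp [st17f, ← h]
  have hg : MonotoneOn (fun y => st17f y / y^2) (Ioc (0:ℝ) 1) := by
    apply monotoneOn_of_deriv_nonneg (convex_Ioc 0 1)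
    · apply ContinuousOn.div st17f_cont.continuousOn (by fun_prop)
      intro y hy
      have := hy.1
      positivity
    · intro y hy
      rw [interior_Ioc] at hy
      obtain ⟨hy0, hy1⟩ := hy
      have hy1' : 0 < 1 + y := by linarith
      have hy2 : 0 < 1 - y := by linarith
      exact ((st17_hd_f hy1' hy2).div (hasDerivAt_pow 2 y) (by positivity)).differentiableAt.differentiableWithinAt
    · intro y hy
      rw [interior_Ioc] at hy
      obtain ⟨hy0, hy1⟩ := hy
      have hy1' : 0 < 1 + y := by linarith
      have hy2 : 0 < 1 - y := by linarith
      have hd := (st17_hd_f hy1' hy2).div (hasDerivAt_pow 2 y) (by positivity : (y:ℝ)^2 ≠ 0)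
      rw [show deriv (fun y => st17f y / y^2) y = _ from hd.deriv]
      have hh := st17_h_nonneg (le_of_lt hy0) hy1
      have hnum : 0 ≤ 2 * st17A y * y^2 - st17f y * (↑2 * y^(2-1)) := by
        norm_num
        nlinarith [hh]
      apply div_nonneg hnum (by positivity)
  have := hg ⟨hx0, h1⟩ ⟨zero_lt_one, le_refl 1⟩ h1
  have hf1 : st17f 1 = 2 * Real.log 2 := by
    norm_num [st17f]
  simp only [hf1, one_pow, div_one] at this
  calc st17f x = (st17f x / x^2) * x^2 := by field_simp
  _ ≤ 2 * Real.log 2 * x^2 := by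
      apply mul_le_mul_of_nonneg_right _ (by positivity)
      exact this

lemma st17_log4 : Real.log 4 = 2 * Real.log 2 := by
  rw [show (4:ℝ) = 2^2 by norm_num, Real.log_pow]; push_cast; ring

lemma st17_log4_gt : 1 < Real.log 4 := by
  rw [st17_log4]
  have := Real.log_two_gt_d9
  linarith

lemma st17_log4_lt : Real.log 4 < 10/7 := by
  rw [st17_log4]
  have := Real.log_two_lt_d9
  linarith

lemma st17_log3 : 1 ≤ Real.log 3 := by
  have h3 : Real.exp 1 < 3 := by
    have := Real.exp_one_lt_d9
    linarith
  have := Real.log_lt_log (Real.exp_pos 1) h3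
  rw [Real.log_exp] at this
  linarith

lemma st17_hd_T {γ x : ℝ} (h1 : 0 < 1 + x) (h2 : 0 < 1 - x) :
    HasDerivAt (fun y => y - st17A y * (1 - γ*y^2))
      (1 - ((1/(1-x^2)) * (1 - γ*x^2) + st17A x * (-(γ*(2*x))))) x := by
  have hq : HasDerivAt (fun y : ℝ => 1 - γ*y^2) (-(γ*(2*x))) x := by
    have := ((hasDerivAt_pow 2 x).const_mul γ).const_sub 1
    simpa using this
  exact (hasDerivAt_id' (𝕜 := ℝ) (x := x)).sub ((st17_hd_A h1 h2).mul hq)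

lemma st17_hd_R {c x : ℝ} (h0 : 0 < x) (h1 : x < 1) :
    HasDerivAt (fun y => Real.log (st17A y) + (1-c)*Real.log (1-y^2) - Real.log y)
      ((st17A x)⁻¹ * (1/(1-x^2)) + (1-c)*((1-x^2)⁻¹ * (-(2*x))) - 1/x) x := by
  have h1' : 0 < 1 + x := by linarith
  have h2' : 0 < 1 - x := by linarith
  have hA : 0 < st17A x := lt_of_lt_of_le h0 (st17_A_ge h0.le h1)
  have hP : 0 < 1 - x^2 := by nlinarith
  have p1 : HasDerivAt (fun y => Real.log (st17A y)) ((st17A x)⁻¹ * (1/(1-x^2))) x :=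
    (Real.hasDerivAt_log hA.ne').comp x (st17_hd_A h1' h2')
  have p2 : HasDerivAt (fun y : ℝ => Real.log (1-y^2)) ((1-x^2)⁻¹ * (-(2*x))) x :=
    by have := (Real.hasDerivAt_log hP.ne').comp x st17_hd_sq; exact this
  have p3 : HasDerivAt Real.log (1/x) x := by
    simpa [one_div] using Real.hasDerivAt_log h0.ne'
  exact (p1.add (p2.const_mul (1-c))).sub p3

lemma st17_hd_G {c x : ℝ} (h1 : 0 < 1 + x) (h2 : 0 < 1 - x) :
    HasDerivAt (fun y => (1-y^2)^(c:ℝ) - 1 + st17f y * c)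
      ((c * (1-x^2)^(c-1)) * (-(2*x)) + (2*st17A x) * c) x := by
  have hP : 0 < 1 - x^2 := by nlinarith
  have p1 : HasDerivAt (fun y : ℝ => (1-y^2)^(c:ℝ)) ((c * (1-x^2)^(c-1)) * (-(2*x))) x :=
    by have := (Real.hasDerivAt_rpow_const (p := c) (Or.inl hP.ne')).comp x st17_hd_sq; exact this
  exact (p1.sub_const 1).add ((st17_hd_f h1 h2).mul_const c)

lemma st17_G_cont {c : ℝ} (hc : 0 < c) :
    Continuous (fun y : ℝ => (1-y^2)^(c:ℝ) - 1 + st17f y * c) := by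
  apply Continuous.add _ (st17f_cont.mul continuous_const)
  apply Continuous.sub _ continuous_const
  rw [continuous_iff_continuousAt]
  intro y
  exact (Real.continuousAt_rpow_const _ _ (Or.inr hc.le)).comp
    (by fun_prop : Continuous fun y : ℝ => 1 - y^2).continuousAt

lemma st17_A_half : st17A (1/2) = Real.log 3 / 2 := by
  unfold st17A
  rw [show (1:ℝ)+1/2 = 3/2 by norm_num, show (1:ℝ)-1/2 = 1/2 by norm_num,
    show (3:ℝ)/2 = 3/2 from rfl, Real.log_div (by norm_num) (by norm_num),
    Real.log_div (by norm_num) (by norm_num), Real.log_one]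
  ring

noncomputable def st17c : ℝ := 1/Real.log 4
noncomputable def st17g : ℝ := 2*st17c - 1
noncomputable def st17k : ℝ := (1-st17g)/(2*st17g)

lemma st17c_lb : 7/10 < st17c := by
  have h := st17_log4_lt
  have h2 := st17_log4_gt
  rw [st17c, lt_div_iff₀ (by linarith)]
  linarith

lemma st17c_ub : st17c < 1 := by
  have h2 := st17_log4_gt
  rw [st17c, div_lt_one (by linarith)]
  linarith

lemma st17g_pos : 0 < st17g := by
  have := st17c_lb; rw [st17g]; linarith

lemma st17g_lt : st17g < 1 := by
  have := st17c_ub; rw [st17g]; linarith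

lemma st17k_eq : 2*st17g*st17k = 1-st17g := by
  have := st17g_pos
  rw [st17k]; field_simp

lemma st17k_le : st17k ≤ 3/4 := by
  have hg := st17g_pos
  have hc := st17c_lb
  rw [st17k, div_le_iff₀ (by linarith)]
  rw [st17g]; rw [st17g] at hg
  linarith

noncomputable def st17T (y : ℝ) : ℝ := y - st17A y * (1 - st17g*y^2)
noncomputable def st17M (y : ℝ) : ℝ := st17A y * (1-y^2)/y
noncomputable def st17R (y : ℝ) : ℝ :=
  Real.log (st17A y) + (1-st17c)*Real.log (1-y^2) - Real.log y
noncomputable def st17G (y : ℝ) : ℝ := (1-y^2)^(st17c) - 1 + st17f y * st17c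

lemma st17_M_anti : AntitoneOn st17M (Ioo (0:ℝ) 1) := by
  apply antitoneOn_of_deriv_nonpos (convex_Ioo 0 1)
  · intro y hy
    obtain ⟨hy0, hy1⟩ := hy
    have h1' : 0 < 1 + y := by linarith
    have h2' : 0 < 1 - y := by linarith
    exact (((st17_hd_A h1' h2').mul st17_hd_sq).div (hasDerivAt_id' (𝕜 := ℝ) (x := y))
      hy0.ne').continuousAt.continuousWithinAt
  · intro y hy
    rw [interior_Ioo] at hy
    obtain ⟨hy0, hy1⟩ := hy
    have h1' : 0 < 1 + y := by linarith
    have h2' : 0 < 1 - y := by linarith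
    exact (((st17_hd_A h1' h2').mul st17_hd_sq).div (hasDerivAt_id' (𝕜 := ℝ) (x := y))
      hy0.ne').differentiableAt.differentiableWithinAt
  · intro y hy
    rw [interior_Ioo] at hy
    obtain ⟨hy0, hy1⟩ := hy
    have h1' : 0 < 1 + y := by linarith
    have h2' : 0 < 1 - y := by linarith
    have hP : 0 < 1 - y^2 := by nlinarith
    have hd : HasDerivAt st17M
        (((1/(1-y^2) * (1-y^2) + st17A y * (-(2*y))) * y - st17A y * (1-y^2) * 1)/y^2) y :=
      ((st17_hd_A h1' h2').mul st17_hd_sq).div (hasDerivAt_id' (𝕜 := ℝ) (x := y)) hy0.ne'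
    rw [hd.deriv]
    have hAy := st17_A_ge hy0.le hy1
    apply div_nonpos_of_nonpos_of_nonneg _ (by positivity)
    have e1 : (1/(1-y^2)) * (1-y^2) = 1 := by field_simp
    rw [e1]
    nlinarith [hAy, hy0, mul_nonneg (mul_nonneg hy0.le hy0.le) (le_trans hy0.le hAy)]

lemma st17_M_half : st17M (1/2) = 3/4 * Real.log 3 := by
  rw [st17M, st17_A_half]
  norm_num
  ring

lemma st17_T_deriv {y : ℝ} (hy0 : 0 < y) (hy1 : y < 1) :
    deriv st17T y = (-(1-st17g)*y^2 + 2*st17g*y*(st17A y*(1-y^2)))/(1-y^2) := by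
  have hd : HasDerivAt st17T
      (1 - ((1/(1-y^2)) * (1 - st17g*y^2) + st17A y * (-(st17g*(2*y))))) y :=
    st17_hd_T (by linarith) (by linarith)
  rw [hd.deriv]
  have hP : (0:ℝ) < 1 - y^2 := by nlinarith
  field_simp
  ring

lemma st17_T_zero : st17T 0 = 0 := by simp [st17T, st17A]

noncomputable def st17SM : Set ℝ := {y | y ∈ Ioo (0:ℝ) 1 ∧ st17k ≤ st17M y}
noncomputable def st17m1 : ℝ := sSup st17SM

lemma st17SM_half : (1/2 : ℝ) ∈ st17SM := by
  refine ⟨⟨by norm_num, by norm_num⟩, ?_⟩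
  rw [st17_M_half]
  nlinarith [st17_log3, st17k_le]

lemma st17SM_bdd : BddAbove st17SM := ⟨1, fun y hy => hy.1.2.le⟩

lemma st17m1_half : 1/2 ≤ st17m1 := le_csSup st17SM_bdd st17SM_half
lemma st17m1_le : st17m1 ≤ 1 := csSup_le ⟨_, st17SM_half⟩ (fun y hy => hy.1.2.le)

lemma st17_T_mono : MonotoneOn st17T (Ico (0:ℝ) 1 ∩ Iic st17m1) := by
  apply monotoneOn_of_deriv_nonneg ((convex_Ico 0 1).inter (convex_Iic st17m1))
  · intro y hy
    exact (st17_hd_T (by linarith [hy.1.1]) (by linarith [hy.1.2])).continuousAt.continuousWithinAt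
  · intro y hy
    rw [interior_inter, interior_Ico, interior_Iic] at hy
    exact (st17_hd_T (by linarith [hy.1.1]) (by linarith [hy.1.2])).differentiableAt.differentiableWithinAt
  · intro y hy
    rw [interior_inter, interior_Ico, interior_Iic] at hy
    obtain ⟨⟨hy0, hy1⟩, hym⟩ := hy
    rw [st17_T_deriv hy0 hy1]
    have hP : (0:ℝ) < 1 - y^2 := by nlinarith
    have hMy : st17k ≤ st17M y := by
      obtain ⟨z, hz, hyz⟩ := exists_lt_of_lt_csSup ⟨_, st17SM_half⟩ hym
      exact le_trans hz.2 (st17_M_anti ⟨hy0, hy1⟩ hz.1 hyz.le)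
    have hMy' : st17k * y ≤ st17A y * (1-y^2) := by
      rw [st17M] at hMy
      calc st17k * y ≤ (st17A y * (1-y^2)/y) * y := by nlinarith
      _ = st17A y * (1-y^2) := by field_simp
    apply div_nonneg _ hP.le
    have h2 : (0:ℝ) ≤ 2*st17g*y := mul_nonneg (mul_nonneg (by norm_num) st17g_pos.le) hy0.le
    have hh := mul_le_mul_of_nonneg_left hMy' h2
    have he : 2*st17g*y*(st17k*y) = (1-st17g)*y^2 := by rw [← st17k_eq]; ring
    rw [he] at hh
    linarith

lemma st17_T_anti : AntitoneOn st17T (Ico st17m1 1) := by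
  have hm := st17m1_half
  apply antitoneOn_of_deriv_nonpos (convex_Ico st17m1 1)
  · intro y hy
    exact (st17_hd_T (by linarith [hy.1]) (by linarith [hy.2])).continuousAt.continuousWithinAt
  · intro y hy
    rw [interior_Ico] at hy
    exact (st17_hd_T (by linarith [hy.1]) (by linarith [hy.2])).differentiableAt.differentiableWithinAt
  · intro y hy
    rw [interior_Ico] at hy
    obtain ⟨hym, hy1⟩ := hy
    have hy0 : 0 < y := by linarith
    rw [st17_T_deriv hy0 hy1]
    have hP : (0:ℝ) < 1 - y^2 := by nlinarith
    have hMy : st17M y < st17k := by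
      by_contra hcon
      push_neg at hcon
      exact absurd (le_csSup st17SM_bdd ⟨⟨hy0, hy1⟩, hcon⟩) (not_le.mpr hym)
    have hMy' : st17A y * (1-y^2) ≤ st17k * y := by
      rw [st17M] at hMy
      calc st17A y * (1-y^2) = (st17A y * (1-y^2)/y) * y := by field_simp
      _ ≤ st17k * y := by nlinarith
    apply div_nonpos_of_nonpos_of_nonneg _ hP.le
    have h2 : (0:ℝ) ≤ 2*st17g*y := mul_nonneg (mul_nonneg (by norm_num) st17g_pos.le) hy0.le
    have hh := mul_le_mul_of_nonneg_left hMy' h2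
    have he : 2*st17g*y*(st17k*y) = (1-st17g)*y^2 := by rw [← st17k_eq]; ring
    rw [he] at hh
    linarith

noncomputable def st17ST : Set ℝ := {y | y ∈ Ico (0:ℝ) 1 ∧ 0 ≤ st17T y}
noncomputable def st17m2 : ℝ := sSup st17ST

lemma st17ST_bdd : BddAbove st17ST := ⟨1, fun y hy => hy.1.2.le⟩

lemma st17ST_half : (1/2:ℝ) ∈ st17ST := by
  refine ⟨⟨by norm_num, by norm_num⟩, ?_⟩
  have h := st17_T_mono (a := 0) (b := 1/2)
    ⟨⟨le_refl 0, by norm_num⟩, by simp; linarith [st17m1_half]⟩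
    ⟨⟨by norm_num, by norm_num⟩, by simp; linarith [st17m1_half]⟩ (by norm_num)
  rw [st17_T_zero] at h
  exact h

lemma st17m2_half : 1/2 ≤ st17m2 := le_csSup st17ST_bdd st17ST_half
lemma st17m2_le : st17m2 ≤ 1 := csSup_le ⟨_, st17ST_half⟩ (fun y hy => hy.1.2.le)

lemma st17_T_nonneg {y : ℝ} (hy0 : 0 < y) (hy1 : y < 1) (hym : y < st17m2) :
    0 ≤ st17T y := by
  rcases le_or_gt y st17m1 with h | h
  · have := st17_T_mono ⟨⟨le_refl 0, by norm_num⟩, by simp; linarith [st17m1_half]⟩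
      ⟨⟨hy0.le, hy1⟩, h⟩ hy0.le
    rw [st17_T_zero] at this
    exact this
  · obtain ⟨z, hz, hyz⟩ := exists_lt_of_lt_csSup ⟨_, st17ST_half⟩ hym
    refine le_trans hz.2 (st17_T_anti ⟨h.le, hy1⟩ ⟨by linarith [hz.1.1, h], hz.1.2⟩ hyz.le)

lemma st17_T_neg {y : ℝ} (hy0 : 0 < y) (hy1 : y < 1) (hym : st17m2 < y) :
    st17T y < 0 := by
  by_contra hcon
  push_neg at hcon
  exact absurd (le_csSup st17ST_bdd ⟨⟨hy0.le, hy1⟩, hcon⟩) (not_le.mpr hym)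

lemma st17_R_deriv {y : ℝ} (hy0 : 0 < y) (hy1 : y < 1) :
    deriv st17R y = st17T y / (y * st17A y * (1-y^2)) := by
  have hA : 0 < st17A y := lt_of_lt_of_le hy0 (st17_A_ge hy0.le hy1)
  have hP : (0:ℝ) < 1 - y^2 := by nlinarith
  have hd : HasDerivAt st17R
      ((st17A y)⁻¹ * (1/(1-y^2)) + (1-st17c)*((1-y^2)⁻¹ * (-(2*y))) - 1/y) y :=
    st17_hd_R (c := st17c) hy0 hy1
  rw [hd.deriv]
  rw [st17T, st17g]
  field_simp
  ring

lemma st17_R_mono : MonotoneOn st17R (Ioo (0:ℝ) 1 ∩ Iic st17m2) := by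
  apply monotoneOn_of_deriv_nonneg ((convex_Ioo 0 1).inter (convex_Iic st17m2))
  · intro y hy
    exact (st17_hd_R (c := st17c) hy.1.1 hy.1.2).continuousAt.continuousWithinAt
  · intro y hy
    rw [interior_inter, interior_Ioo, interior_Iic] at hy
    exact (st17_hd_R (c := st17c) hy.1.1 hy.1.2).differentiableAt.differentiableWithinAt
  · intro y hy
    rw [interior_inter, interior_Ioo, interior_Iic] at hy
    obtain ⟨⟨hy0, hy1⟩, hym⟩ := hy
    rw [st17_R_deriv hy0 hy1]
    have hA : 0 < st17A y := lt_of_lt_of_le hy0 (st17_A_ge hy0.le hy1)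
    have hP : (0:ℝ) < 1 - y^2 := by nlinarith
    exact div_nonneg (st17_T_nonneg hy0 hy1 hym) (by positivity)

lemma st17_R_lim : Filter.Tendsto st17R (nhdsWithin 0 (Ioi (0:ℝ))) (nhds 0) := by
  have hd : HasDerivAt st17A 1 0 := by
    have := st17_hd_A (x := 0) (by norm_num) (by norm_num)
    norm_num at this
    exact this
  rw [hasDerivAt_iff_tendsto_slope] at hd
  have hslope : Filter.Tendsto (fun y => st17A y / y) (nhdsWithin 0 (Ioi (0:ℝ))) (nhds 1) := by
    have hmono : nhdsWithin 0 (Ioi (0:ℝ)) ≤ nhdsWithin 0 ({0}ᶜ : Set ℝ) := by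
      apply nhdsWithin_mono
      intro y hy
      simpa using (ne_of_gt hy)
    refine (hd.mono_left hmono).congr ?_
    intro y
    rw [slope_def_field]
    have : st17A 0 = 0 := by simp [st17A]
    rw [this]
    simp
  have hpart1 : Filter.Tendsto (fun y => Real.log (st17A y / y))
      (nhdsWithin 0 (Ioi (0:ℝ))) (nhds 0) := by
    have := (Real.continuousAt_log one_ne_zero).tendsto.comp hslope
    rwa [Real.log_one] at this
  have hpart2 : Filter.Tendsto (fun y : ℝ => (1-st17c)*Real.log (1-y^2))
      (nhdsWithin 0 (Ioi (0:ℝ))) (nhds 0) := by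
    have hcont : ContinuousAt (fun y : ℝ => (1-st17c)*Real.log (1-y^2)) 0 :=
      continuousAt_const.mul (ContinuousAt.log (by fun_prop) (by norm_num))
    have h2 : Filter.Tendsto (fun y : ℝ => (1-st17c)*Real.log (1-y^2))
        (nhdsWithin 0 (Ioi (0:ℝ))) (nhds ((1-st17c)*Real.log (1-(0:ℝ)^2))) :=
      hcont.tendsto.mono_left nhdsWithin_le_nhds
    norm_num at h2
    exact h2
  have hsum := hpart1.add hpart2
  rw [add_zero] at hsum
  refine hsum.congr' ?_
  filter_upwards [Ioo_mem_nhdsGT_of_mem (Set.mem_Ico.mpr ⟨le_refl (0:ℝ), one_pos⟩)] with y hy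
  obtain ⟨hy0, hy1⟩ := hy
  have hA : 0 < st17A y := lt_of_lt_of_le hy0 (st17_A_ge hy0.le hy1)
  rw [Real.log_div hA.ne' hy0.ne']
  rw [st17R]
  ring

lemma st17_R_nonneg₁ {y : ℝ} (hy0 : 0 < y) (hy1 : y < 1) (hym : y ≤ st17m2) :
    0 ≤ st17R y := by
  apply le_of_tendsto st17_R_lim
  filter_upwards [Ioo_mem_nhdsGT_of_mem (Set.mem_Ico.mpr ⟨le_refl (0:ℝ), hy0⟩)] with t ht
  exact st17_R_mono ⟨⟨ht.1, lt_trans ht.2 hy1⟩, le_trans ht.2.le hym⟩ ⟨⟨hy0, hy1⟩, hym⟩ ht.2.le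

noncomputable def st17SR : Set ℝ := {y | y ∈ Ioo (0:ℝ) 1 ∧ 0 ≤ st17R y}
noncomputable def st17m3 : ℝ := sSup st17SR

lemma st17SR_bdd : BddAbove st17SR := ⟨1, fun y hy => hy.1.2.le⟩
lemma st17SR_half : (1/2:ℝ) ∈ st17SR :=
  ⟨⟨by norm_num, by norm_num⟩, st17_R_nonneg₁ (by norm_num) (by norm_num) st17m2_half⟩
lemma st17m3_half : 1/2 ≤ st17m3 := le_csSup st17SR_bdd st17SR_half
lemma st17m3_le : st17m3 ≤ 1 := csSup_le ⟨_, st17SR_half⟩ (fun y hy => hy.1.2.le)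

lemma st17_R_anti : AntitoneOn st17R (Ico st17m2 1) := by
  have hm := st17m2_half
  apply antitoneOn_of_deriv_nonpos (convex_Ico st17m2 1)
  · intro y hy
    exact (st17_hd_R (c := st17c) (by linarith [hy.1]) hy.2).continuousAt.continuousWithinAt
  · intro y hy
    rw [interior_Ico] at hy
    exact (st17_hd_R (c := st17c) (by linarith [hy.1]) hy.2).differentiableAt.differentiableWithinAt
  · intro y hy
    rw [interior_Ico] at hy
    obtain ⟨hym, hy1⟩ := hy
    have hy0 : 0 < y := by linarith
    rw [st17_R_deriv hy0 hy1]
    have hA : 0 < st17A y := lt_of_lt_of_le hy0 (st17_A_ge hy0.le hy1)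
    have hP : (0:ℝ) < 1 - y^2 := by nlinarith
    exact div_nonpos_of_nonpos_of_nonneg (st17_T_neg hy0 hy1 hym).le (by positivity)

lemma st17_R_nonneg {y : ℝ} (hy0 : 0 < y) (hy1 : y < 1) (hym : y < st17m3) :
    0 ≤ st17R y := by
  rcases le_or_gt y st17m2 with h | h
  · exact st17_R_nonneg₁ hy0 hy1 h
  · obtain ⟨z, hz, hyz⟩ := exists_lt_of_lt_csSup ⟨_, st17SR_half⟩ hym
    exact le_trans hz.2 (st17_R_anti ⟨h.le, hy1⟩ ⟨by linarith [hz.1.1], hz.1.2⟩ hyz.le)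

lemma st17_R_neg {y : ℝ} (hy0 : 0 < y) (hy1 : y < 1) (hym : st17m3 < y) :
    st17R y < 0 := by
  by_contra hcon
  push_neg at hcon
  exact absurd (le_csSup st17SR_bdd ⟨⟨hy0, hy1⟩, hcon⟩) (not_le.mpr hym)

lemma st17c_pos : 0 < st17c := by linarith [st17c_lb]

lemma st17_G_deriv {y : ℝ} (hy1 : 0 < 1 + y) (hy2 : 0 < 1 - y) :
    deriv st17G y = 2*st17c*(st17A y - y*(1-y^2)^(st17c-1)) := by
  have hd : HasDerivAt st17G
      ((st17c * (1-y^2)^(st17c-1)) * (-(2*y)) + (2*st17A y) * st17c) y :=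
    st17_hd_G hy1 hy2
  rw [hd.deriv]
  ring

lemma st17_G_deriv_nonneg {y : ℝ} (hy0 : 0 < y) (hy1 : y < 1) (hR : 0 ≤ st17R y) :
    0 ≤ deriv st17G y := by
  have hA : 0 < st17A y := lt_of_lt_of_le hy0 (st17_A_ge hy0.le hy1)
  have hP : (0:ℝ) < 1 - y^2 := by nlinarith
  rw [st17_G_deriv (by linarith) (by linarith)]
  have hZ : 0 < st17A y * (1-y^2)^(1-st17c) := mul_pos hA (Real.rpow_pos_of_pos hP _)
  have hlog : Real.log (st17A y * (1-y^2)^(1-st17c))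
      = Real.log (st17A y) + (1-st17c)*Real.log (1-y^2) := by
    rw [Real.log_mul hA.ne' (Real.rpow_pos_of_pos hP _).ne', Real.log_rpow hP]
  have hle : Real.log y ≤ Real.log (st17A y * (1-y^2)^(1-st17c)) := by
    rw [hlog]
    rw [st17R] at hR
    linarith
  have key : y ≤ st17A y * (1-y^2)^(1-st17c) := by
    calc y = Real.exp (Real.log y) := (Real.exp_log hy0).symm
    _ ≤ Real.exp (Real.log (st17A y * (1-y^2)^(1-st17c))) := Real.exp_le_exp.mpr hle
    _ = st17A y * (1-y^2)^(1-st17c) := Real.exp_log hZ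
  have hmul := mul_le_mul_of_nonneg_right key (Real.rpow_nonneg hP.le (st17c-1))
  rw [mul_assoc, ← Real.rpow_add hP] at hmul
  norm_num at hmul
  nlinarith [st17c_pos, hmul]

lemma st17_G_deriv_nonpos {y : ℝ} (hy0 : 0 < y) (hy1 : y < 1) (hR : st17R y < 0) :
    deriv st17G y ≤ 0 := by
  have hA : 0 < st17A y := lt_of_lt_of_le hy0 (st17_A_ge hy0.le hy1)
  have hP : (0:ℝ) < 1 - y^2 := by nlinarith
  rw [st17_G_deriv (by linarith) (by linarith)]
  have hZ : 0 < st17A y * (1-y^2)^(1-st17c) := mul_pos hA (Real.rpow_pos_of_pos hP _)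
  have hlog : Real.log (st17A y * (1-y^2)^(1-st17c))
      = Real.log (st17A y) + (1-st17c)*Real.log (1-y^2) := by
    rw [Real.log_mul hA.ne' (Real.rpow_pos_of_pos hP _).ne', Real.log_rpow hP]
  have hle : Real.log (st17A y * (1-y^2)^(1-st17c)) ≤ Real.log y := by
    rw [hlog]
    rw [st17R] at hR
    linarith
  have key : st17A y * (1-y^2)^(1-st17c) ≤ y := by
    calc st17A y * (1-y^2)^(1-st17c) = Real.exp (Real.log (st17A y * (1-y^2)^(1-st17c))) :=
      (Real.exp_log hZ).symm
    _ ≤ Real.exp (Real.log y) := Real.exp_le_exp.mpr hle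
    _ = y := Real.exp_log hy0
  have hmul := mul_le_mul_of_nonneg_right key (Real.rpow_nonneg hP.le (st17c-1))
  rw [mul_assoc, ← Real.rpow_add hP] at hmul
  norm_num at hmul
  nlinarith [st17c_pos, hmul]

lemma st17_G_zero : st17G 0 = 0 := by
  norm_num [st17G, st17f]

lemma st17_G_one : st17G 1 = 0 := by
  have hf1 : st17f 1 = 2 * Real.log 2 := by norm_num [st17f]
  have h4 : Real.log 4 = 2 * Real.log 2 := st17_log4
  have hpos : (0:ℝ) < Real.log 2 := Real.log_pos (by norm_num)
  rw [st17G, hf1]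
  norm_num
  rw [Real.zero_rpow st17c_pos.ne']
  rw [st17c, h4]
  field_simp
  ring

lemma st17_G_nonneg {y : ℝ} (hy0 : 0 ≤ y) (hy1 : y ≤ 1) : 0 ≤ st17G y := by
  have hGc : Continuous st17G := st17_G_cont st17c_pos
  rcases le_total y st17m3 with h | h
  · have hmono : MonotoneOn st17G (Icc 0 st17m3) := by
      apply monotoneOn_of_deriv_nonneg (convex_Icc 0 st17m3)
      · exact hGc.continuousOn
      · intro z hz
        rw [interior_Icc] at hz
        have hz1 : z < 1 := lt_of_lt_of_le hz.2 st17m3_le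
        exact (st17_hd_G (by linarith [hz.1]) (by linarith)).differentiableAt.differentiableWithinAt
      · intro z hz
        rw [interior_Icc] at hz
        have hz1 : z < 1 := lt_of_lt_of_le hz.2 st17m3_le
        exact st17_G_deriv_nonneg hz.1 hz1 (st17_R_nonneg hz.1 hz1 hz.2)
    have := hmono ⟨le_refl 0, by linarith [st17m3_half]⟩ ⟨hy0, h⟩ hy0
    rw [st17_G_zero] at this
    exact this
  · have hanti : AntitoneOn st17G (Icc st17m3 1) := by
      apply antitoneOn_of_deriv_nonpos (convex_Icc st17m3 1)
      · exact hGc.continuousOn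
      · intro z hz
        rw [interior_Icc] at hz
        have hz0 : 0 < z := by linarith [st17m3_half, hz.1]
        exact (st17_hd_G (by linarith) (by linarith [hz.2])).differentiableAt.differentiableWithinAt
      · intro z hz
        rw [interior_Icc] at hz
        have hz0 : 0 < z := by linarith [st17m3_half, hz.1]
        exact st17_G_deriv_nonpos hz0 hz.2 (st17_R_neg hz0 hz.2 hz.1)
    have := hanti ⟨h, hy1⟩ ⟨st17m3_le, le_refl 1⟩ hy1
    rw [st17_G_one] at this
    exact this

lemma st17_upper {x : ℝ} (h0 : 0 ≤ x) (h1 : x ≤ 1) :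
    1 - st17f x * st17c ≤ (1 - x^2) ^ (st17c) := by
  have := st17_G_nonneg h0 h1
  rw [st17G] at this
  linarith

lemma st17_binEnt_symm (q : ℝ) : binEnt (1 - q) = binEnt q := by
  have h : 1 - (1 - q) = q := by ring
  rw [binEnt, binEnt, h]
  ring

lemma st17_binEnt_eq {x : ℝ} (h0 : 0 ≤ x) (h1 : x < 1) :
    binEnt ((1+x)/2) = 1 - st17f x * st17c := by
  have hlog2 : 0 < Real.log 2 := Real.log_pos (by norm_num)
  have hp : (1:ℝ) + x ≠ 0 := by linarith
  have hm : (1:ℝ) - x ≠ 0 := by linarith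
  have hq : 1 - (1+x)/2 = (1-x)/2 := by ring
  rw [binEnt, hq, Real.logb, Real.logb,
    Real.log_div hp (by norm_num : (2:ℝ) ≠ 0),
    Real.log_div hm (by norm_num : (2:ℝ) ≠ 0),
    st17f, st17c, st17_log4]
  field_simp
  ring

theorem stmt17 (b : ℝ) (hb : |b| ≤ 1 / 2) :
    1 - 4 * b ^ 2 ≤ binEnt (1 / 2 + b) ∧
    binEnt (1 / 2 + b) ≤ (1 - 4 * b ^ 2) ^ (1 / Real.log 4) := by
  have habs : binEnt (1/2 + b) = binEnt ((1 + 2*|b|)/2) := by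
    rcases abs_cases b with ⟨h, _⟩ | ⟨h, _⟩
    · rw [h]; congr 1; ring
    · rw [h, ← st17_binEnt_symm (1/2 + b)]; congr 1; ring
  set x : ℝ := 2*|b| with hxdef
  have hx0 : 0 ≤ x := by positivity
  have hx1 : x ≤ 1 := by
    rw [hxdef]; linarith [hb]
  have hbx : 1 - 4*b^2 = 1 - x^2 := by
    rw [hxdef, ← sq_abs b]; ring
  have hcrfl : (1:ℝ)/Real.log 4 = st17c := rfl
  rcases lt_or_eq_of_le hx1 with hlt | heq
  · have hbe : binEnt (1/2 + b) = 1 - st17f x * st17c := by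
      rw [habs, st17_binEnt_eq hx0 hlt]
    constructor
    · rw [hbe, hbx]
      have hfle := st17_f_le hx0 hx1
      have hc : st17c = 1/(2*Real.log 2) := by rw [st17c, st17_log4]
      have hlog2 : 0 < Real.log 2 := Real.log_pos (by norm_num)
      have hfc : st17f x * st17c ≤ x^2 := by
        rw [hc, mul_one_div, div_le_iff₀ (by positivity)]
        calc st17f x ≤ 2*Real.log 2*x^2 := hfle
        _ = x^2 * (2*Real.log 2) := by ring
      linarith
    · rw [hbe, hbx, hcrfl]
      exact st17_upper hx0 hx1
  · have hb1 : binEnt (1/2 + b) = binEnt 1 := by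
      rw [habs, heq]; norm_num
    have hbe : binEnt (1:ℝ) = 0 := by simp [binEnt]
    have hz : 1 - 4*b^2 = 0 := by rw [hbx, heq]; ring
    constructor
    · rw [hb1, hbe, hz]
    · rw [hb1, hbe, hz]
      exact Real.rpow_nonneg le_rfl _
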